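/- arXiv:2507.22427 — 4 statements merged into one kernel-verified Lean document; each statement's English description precedes it below -/
import Mathlib

section
/- If x, y, e are vectors in a complex inner product space with ‖e‖ = 1, then |⟨x, e⟩ ⟨e, y⟩| ≤ (1/2)(‖x‖ ‖y‖ + |⟨x, y⟩|). -/
/-!
The reflection `R = 2P - 1` through the range of an orthogonal projection `P` is an isometry, so
`2 ⟪x, P y⟫ = ⟪x, R y⟫ + ⟪x, y⟫` has norm at most `‖x‖ ‖y‖ + ‖⟪x, y⟫‖` by Cauchy–Schwarz.
Buzano's inequality is the case of the projection onto the line spanned by a unit vector `e`.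
-/

open scoped InnerProductSpace

namespace Submodule

variable {𝕜 E : Type*} [RCLike 𝕜] [NormedAddCommGroup E] [InnerProductSpace 𝕜 E]

theorem two_mul_inner_starProjection_right (K : Submodule 𝕜 E) [K.HasOrthogonalProjection]
    (x y : E) : 2 * ⟪x, K.starProjection y⟫_𝕜 = ⟪x, K.reflection y⟫_𝕜 + ⟪x, y⟫_𝕜 := by
  rw [reflection_apply, inner_sub_right, inner_smul_right_eq_smul, nsmul_eq_mul]
  push_cast
  ring

theorem norm_inner_starProjection_right_le (K : Submodule 𝕜 E) [K.HasOrthogonalProjection]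
    (x y : E) : ‖⟪x, K.starProjection y⟫_𝕜‖ ≤ (1 / 2) * (‖x‖ * ‖y‖ + ‖⟪x, y⟫_𝕜‖) := by
  have h : 2 * ‖⟪x, K.starProjection y⟫_𝕜‖ ≤ ‖x‖ * ‖y‖ + ‖⟪x, y⟫_𝕜‖ :=
    calc 2 * ‖⟪x, K.starProjection y⟫_𝕜‖
        = ‖⟪x, K.reflection y⟫_𝕜 + ⟪x, y⟫_𝕜‖ := by
          rw [← two_mul_inner_starProjection_right, norm_mul, RCLike.norm_two]
      _ ≤ ‖x‖ * ‖K.reflection y‖ + ‖⟪x, y⟫_𝕜‖ :=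
          (norm_add_le _ _).trans (add_le_add_left (norm_inner_le_norm _ _) _)
      _ = ‖x‖ * ‖y‖ + ‖⟪x, y⟫_𝕜‖ := by rw [LinearIsometryEquiv.norm_map]
  linarith

end Submodule

theorem norm_inner_mul_inner_le_of_norm_eq_one {𝕜 E : Type*} [RCLike 𝕜] [NormedAddCommGroup E]
    [InnerProductSpace 𝕜 E] (x y : E) {e : E} (he : ‖e‖ = 1) :
    ‖⟪x, e⟫_𝕜 * ⟪e, y⟫_𝕜‖ ≤ (1 / 2) * (‖x‖ * ‖y‖ + ‖⟪x, y⟫_𝕜‖) := by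
  have h := (𝕜 ∙ e).norm_inner_starProjection_right_le x y
  rwa [Submodule.starProjection_unit_singleton 𝕜 he, inner_smul_right, mul_comm] at h

/-- Buzano's inequality. -/
theorem stmt_1 {H : Type*} [NormedAddCommGroup H] [InnerProductSpace ℂ H]
    (x y e : H) (he : ‖e‖ = 1) :
    ‖⟪x, e⟫_ℂ * ⟪e, y⟫_ℂ‖ ≤ (1 / 2) * (‖x‖ * ‖y‖ + ‖⟪x, y⟫_ℂ‖) :=
  norm_inner_mul_inner_le_of_norm_eq_one x y he
end

section
/- If T is a positive bounded linear operator on a complex Hilbert space, x is a unit vector, and p ≥ 1, then ⟨T x, x⟩^p ≤ ⟨T^p x, x⟩. -/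
/-!
Since `t ↦ t ^ p` is convex on `[0, ∞)`, it lies above its tangent line at `a = ⟪T x, x⟫`:
`a ^ p + p a ^ (p - 1) (t - a) ≤ t ^ p` on the spectrum of `T`. Monotonicity of the functional
calculus turns this into `a ^ p + p a ^ (p - 1) (T - a) ≤ T ^ p`, and evaluating both sides at the
unit vector `x` kills the linear term.
-/

open scoped InnerProductSpace

namespace Real

theorem rpow_add_mul_sub_le_rpow {a t p : ℝ} (ha : 0 ≤ a) (ht : 0 ≤ t) (hp : 1 ≤ p) :
    a ^ p + p * a ^ (p - 1) * (t - a) ≤ t ^ p := by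
  rcases ha.eq_or_lt with rfl | ha
  · rcases hp.eq_or_lt with rfl | hp
    · simp
    · simpa [zero_rpow (by linarith : p ≠ 0), zero_rpow (by linarith : p - 1 ≠ 0)]
        using rpow_nonneg ht p
  · have hb := one_add_mul_self_le_rpow_one_add (s := t / a - 1)
      (by linarith [div_nonneg ht ha.le]) hp
    rw [add_sub_cancel, div_rpow ht ha.le, le_div_iff₀ (rpow_pos_of_pos ha p)] at hb
    calc a ^ p + p * a ^ (p - 1) * (t - a) = (1 + p * (t / a - 1)) * a ^ p := by
          rw [rpow_sub_one ha.ne']; field_simp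
      _ ≤ t ^ p := hb

end Real

namespace ContinuousLinearMap

variable {𝕜 E : Type*} [RCLike 𝕜] [NormedAddCommGroup E] [InnerProductSpace 𝕜 E]

theorem re_inner_le_re_inner_of_le {A B : E →L[𝕜] E} (h : A ≤ B) (x : E) :
    RCLike.re ⟪A x, x⟫_𝕜 ≤ RCLike.re ⟪B x, x⟫_𝕜 := by
  simpa [inner_sub_left] using ((le_def A B).mp h).re_inner_nonneg_left x

end ContinuousLinearMap

section

variable {H : Type*} [NormedAddCommGroup H] [InnerProductSpace ℂ H] [CompleteSpace H]

theorem add_mul_re_inner_le_re_inner_cfc {T : H →L[ℂ] H} (hT : IsSelfAdjoint T) {f : ℝ → ℝ}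
    (hf : ContinuousOn f (spectrum ℝ T)) {α β : ℝ} (h : ∀ t ∈ spectrum ℝ T, α + β * t ≤ f t)
    {x : H} (hx : ‖x‖ = 1) :
    α + β * (⟪T x, x⟫_ℂ).re ≤ (⟪cfc f T x, x⟫_ℂ).re := by
  have hle : algebraMap ℝ (H →L[ℂ] H) α + β • T ≤ cfc f T :=
    calc algebraMap ℝ (H →L[ℂ] H) α + β • T = cfc (fun t ↦ α + β * t) T := by
          rw [cfc_const_add .., cfc_const_mul_id ..]
      _ ≤ cfc f T := cfc_mono h
  simpa [inner_add_left, ← Complex.coe_smul, inner_smul_left, Algebra.algebraMap_eq_smul_one,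
    inner_self_eq_norm_sq, hx]
    using ContinuousLinearMap.re_inner_le_re_inner_of_le hle x

theorem apply_re_inner_le_re_inner_cfc {T : H →L[ℂ] H} (hT : IsSelfAdjoint T) {f : ℝ → ℝ}
    (hf : ContinuousOn f (spectrum ℝ T)) {x : H} (hx : ‖x‖ = 1) {c : ℝ}
    (hsupp : ∀ t ∈ spectrum ℝ T, f (⟪T x, x⟫_ℂ).re + c * (t - (⟪T x, x⟫_ℂ).re) ≤ f t) :
    f (⟪T x, x⟫_ℂ).re ≤ (⟪cfc f T x, x⟫_ℂ).re := by
  have := add_mul_re_inner_le_re_inner_cfc hT hf (α := f (⟪T x, x⟫_ℂ).re - c * (⟪T x, x⟫_ℂ).re)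
    (β := c) (fun t ht ↦ by linarith [hsupp t ht]) hx
  linarith

end

/-- McCarthy's inequality: for a positive operator `T`, a unit vector `x` and `p ≥ 1`,
`⟨T x, x⟩ ^ p ≤ ⟨T^p x, x⟩`. -/
theorem stmt_2 {H : Type*} [NormedAddCommGroup H] [InnerProductSpace ℂ H] [CompleteSpace H]
    (T : H →L[ℂ] H) (hT : 0 ≤ T) (x : H) (hx : ‖x‖ = 1) (p : ℝ) (hp : 1 ≤ p) :
    (⟪T x, x⟫_ℂ).re ^ p ≤ (⟪(CFC.rpow T p) x, x⟫_ℂ).re := by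
  have ha : 0 ≤ (⟪T x, x⟫_ℂ).re :=
    ((ContinuousLinearMap.nonneg_iff_isPositive T).mp hT).re_inner_nonneg_left x
  rw [show CFC.rpow T p = T ^ p from rfl, CFC.rpow_eq_cfc_real hT]
  exact apply_re_inner_le_re_inner_cfc (f := (· ^ p)) hT.isSelfAdjoint
    (Real.continuous_rpow_const (by linarith)).continuousOn hx
    fun t ht ↦ Real.rpow_add_mul_sub_le_rpow ha (spectrum_nonneg_of_nonneg hT ht) hp
end

section
/- Let T be a bounded operator on a reproducing kernel Hilbert space H over Ω, p ≥ 1, and define c̃(T) := inf_{λ∈Ω} |⟨T k̂_λ, k̂_λ⟩|. For any mean σ_μ monotone in each argument, sup_λ (|⟨T k̂_λ, k̂_λ⟩|^p σ_μ ‖T k̂_λ‖^p) ≥ max{ ber(T)^p σ_μ c̃(T*T)^{p/2}, c̃(T)^p σ_μ ‖T‖_ber^p }. -/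
open scoped InnerProductSpace
open ContinuousLinearMap Set

/-
Both bounds come from pulling a supremum out of one argument of `σ` and an infimum out of the
other: by monotonicity and continuity, `σ(sup u, inf v) = sup_λ σ(u_λ, inf v) ≤ sup_λ σ(u_λ, v_λ)`.
With `u_λ = |⟨T k̂_λ, k̂_λ⟩|^p` and `v_λ = ‖T k̂_λ‖^p = ⟨T*T k̂_λ, k̂_λ⟩^{p/2}` this gives the first
bound, and with the roles of the two arguments exchanged the second one; `x ↦ x^p` commutes with
suprema and infima of nonnegative families.
-/

lemma Real.iSup_rpow {ι : Sort*} {f : ι → ℝ} (hf : ∀ i, 0 ≤ f i) {p : ℝ} (hp : 0 < p) :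
    (⨆ i, f i) ^ p = ⨆ i, f i ^ p := by
  lift f to ι → NNReal using hf
  rw [← NNReal.coe_iSup, ← NNReal.coe_rpow, ← NNReal.orderIsoRpow_apply p hp,
    OrderIso.map_ciSup', NNReal.coe_iSup]
  rfl

lemma Real.iInf_rpow {ι : Sort*} [Nonempty ι] {f : ι → ℝ} (hf : ∀ i, 0 ≤ f i) {p : ℝ}
    (hp : 0 < p) : (⨅ i, f i) ^ p = ⨅ i, f i ^ p := by
  lift f to ι → NNReal using hf
  rw [← NNReal.coe_iInf, ← NNReal.coe_rpow, ← NNReal.orderIsoRpow_apply p hp,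
    OrderIso.map_ciInf _ (OrderBot.bddBelow _), NNReal.coe_iInf]
  rfl

lemma ContinuousLinearMap.norm_inner_adjoint_comp_self_apply {𝕜 E F : Type*} [RCLike 𝕜]
    [NormedAddCommGroup E] [InnerProductSpace 𝕜 E] [CompleteSpace E] [NormedAddCommGroup F]
    [InnerProductSpace 𝕜 F] [CompleteSpace F] (A : E →L[𝕜] F) (x : E) :
    ‖⟪(adjoint A ∘L A) x, x⟫_𝕜‖ = ‖A x‖ ^ 2 := by
  rw [comp_apply, adjoint_inner_left, inner_self_eq_norm_sq_to_K, norm_pow, RCLike.norm_ofReal,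
    abs_norm]

section Monotone₂

variable {ι : Sort*} [Nonempty ι] {σ : ℝ → ℝ → ℝ} {u v : ι → ℝ}

lemma map₂_ciSup_ciInf_le_ciSup_map₂ (hσ : ∀ a b c d : ℝ, a ≤ c → b ≤ d → σ a b ≤ σ c d)
    (hσc : ∀ y, Continuous (σ · y)) (hu : BddAbove (range u)) (hv : BddAbove (range v))
    (hv' : BddBelow (range v)) :
    σ (⨆ i, u i) (⨅ i, v i) ≤ ⨆ i, σ (u i) (v i) := by
  have hbdd : BddAbove (range fun i => σ (u i) (v i)) := by
    refine ⟨σ (⨆ i, u i) (⨆ i, v i), ?_⟩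
    rintro _ ⟨i, rfl⟩
    exact hσ _ _ _ _ (le_ciSup hu i) (le_ciSup hv i)
  calc σ (⨆ i, u i) (⨅ i, v i) = ⨆ i, σ (u i) (⨅ i, v i) :=
        Monotone.map_ciSup_of_continuousAt (f := (σ · (⨅ i, v i))) (hσc _).continuousAt
          (fun _ _ h => hσ _ _ _ _ h le_rfl) hu
    _ ≤ ⨆ i, σ (u i) (v i) := ciSup_mono hbdd fun i => hσ _ _ _ _ le_rfl (ciInf_le hv' i)

lemma map₂_ciInf_ciSup_le_ciSup_map₂ (hσ : ∀ a b c d : ℝ, a ≤ c → b ≤ d → σ a b ≤ σ c d)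
    (hσc : ∀ x, Continuous (σ x)) (hu : BddAbove (range u)) (hu' : BddBelow (range u))
    (hv : BddAbove (range v)) :
    σ (⨅ i, u i) (⨆ i, v i) ≤ ⨆ i, σ (u i) (v i) :=
  map₂_ciSup_ciInf_le_ciSup_map₂ (σ := fun y x => σ x y) (fun _ _ _ _ h h' => hσ _ _ _ _ h' h)
    hσc hv hu hu'

end Monotone₂

/-- Lower bound for the `σ_μ`-Berezin quantity:
`sup_λ σ(|⟨T k̂_λ, k̂_λ⟩|^p, ‖T k̂_λ‖^p) ≥ max{σ(ber(T)^p, c̃(T*T)^{p/2}), σ(c̃(T)^p, ‖T‖_ber^p)}`. -/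
theorem stmt_8 {H : Type*} [NormedAddCommGroup H] [InnerProductSpace ℂ H] [CompleteSpace H]
    {Ω : Type*} [Nonempty Ω] (khat : Ω → H) (hk : ∀ l : Ω, ‖khat l‖ = 1)
    (T : H →L[ℂ] H) (p : ℝ) (hp : 1 ≤ p) (σ : ℝ → ℝ → ℝ)
    (hσ : ∀ a b c d : ℝ, a ≤ c → b ≤ d → σ a b ≤ σ c d)
    (hσc : Continuous fun q : ℝ × ℝ => σ q.1 q.2) :
    max (σ ((⨆ l : Ω, ‖⟪T (khat l), khat l⟫_ℂ‖) ^ p)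
          ((⨅ l : Ω, ‖⟪(adjoint T ∘L T) (khat l), khat l⟫_ℂ‖) ^ (p / 2)))
        (σ ((⨅ l : Ω, ‖⟪T (khat l), khat l⟫_ℂ‖) ^ p) ((⨆ l : Ω, ‖T (khat l)‖) ^ p))
      ≤ ⨆ l : Ω, σ (‖⟪T (khat l), khat l⟫_ℂ‖ ^ p) (‖T (khat l)‖ ^ p) := by
  have hp₀ : 0 < p := by linarith
  have hTk : ∀ l, ‖T (khat l)‖ ≤ ‖T‖ := fun l => T.unit_le_opNorm _ (hk l).le
  have hber : ∀ l, ‖⟪T (khat l), khat l⟫_ℂ‖ ≤ ‖T‖ := fun l =>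
    (norm_inner_le_norm _ _).trans (by rw [hk, mul_one]; exact hTk l)
  have hTT : ∀ l, ‖⟪(adjoint T ∘L T) (khat l), khat l⟫_ℂ‖ ^ (p / 2) = ‖T (khat l)‖ ^ p := by
    intro l
    rw [norm_inner_adjoint_comp_self_apply, ← Real.rpow_natCast, ← Real.rpow_mul (norm_nonneg _)]
    ring_nf
  have bddAbove_rpow : ∀ {f : Ω → ℝ}, (∀ l, 0 ≤ f l) → (∀ l, f l ≤ ‖T‖) →
      BddAbove (range fun l => f l ^ p) := fun h₀ hle =>
    ⟨‖T‖ ^ p, by rintro _ ⟨l, rfl⟩; exact Real.rpow_le_rpow (h₀ l) (hle l) hp₀.le⟩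
  have bddBelow_rpow : ∀ {f : Ω → ℝ}, (∀ l, 0 ≤ f l) → BddBelow (range fun l => f l ^ p) :=
    fun h₀ => ⟨0, by rintro _ ⟨l, rfl⟩; exact Real.rpow_nonneg (h₀ l) p⟩
  rw [Real.iSup_rpow (fun _ => norm_nonneg _) hp₀, Real.iSup_rpow (fun _ => norm_nonneg _) hp₀,
    Real.iInf_rpow (fun _ => norm_nonneg _) hp₀,
    Real.iInf_rpow (fun _ => norm_nonneg _) (by positivity), iInf_congr hTT]
  exact max_le
    (map₂_ciSup_ciInf_le_ciSup_map₂ hσ (fun y => hσc.comp (.prodMk_left y))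
      (bddAbove_rpow (fun _ => norm_nonneg _) hber) (bddAbove_rpow (fun _ => norm_nonneg _) hTk)
      (bddBelow_rpow fun _ => norm_nonneg _))
    (map₂_ciInf_ciSup_le_ciSup_map₂ hσ (fun x => hσc.comp (.prodMk_right x))
      (bddAbove_rpow (fun _ => norm_nonneg _) hber) (bddBelow_rpow fun _ => norm_nonneg _)
      (bddAbove_rpow (fun _ => norm_nonneg _) hTk))
end

section
/- Consider the composition operator C_φ on the Hardy space H²(𝔻) induced by φ(z) = ζ z for a fixed ζ in the closed unit disc. Its Berezin transform at λ ∈ 𝔻 is C̃_φ(λ) = (1 − |λ|²)/(1 − ζ|λ|²), and the Berezin range {C̃_φ(λ) : λ ∈ 𝔻} is convex if and only if ζ ∈ [−1, 1]. -/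
/-!
The Berezin transform depends on `λ` only through `s = |λ|² ∈ [0, 1)`, where it equals
`(1 - s)/(1 - ζ s)`. For real `ζ = t ≤ 1` this is a continuous real function of `s`, so the
range is a connected subset of `ℝ`, i.e. an interval. Conversely, if the range is convex, the
midpoint of the values `1` (at `s = 0`) and `1/(2 - ζ)` (at `s = 1/2`) is attained at some `s`;
clearing denominators, this factors as `(1 - ζ)(ζ s - (4 s - 1)) = 0`, so `ζ = 1` or
`ζ = 4 - 1/s`, and `ζ` is real either way.
-/

open Set

/-- `C̃_φ(λ)` as a function of `s = |λ|²`. -/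
noncomputable def radialBerezin (ζ : ℂ) (s : ℝ) : ℂ :=
  (1 - s) / (1 - ζ * s)

lemma image_norm_sq_ball : (fun l : ℂ => ‖l‖ ^ 2) '' Metric.ball 0 1 = Ico 0 1 := by
  ext s
  constructor
  · rintro ⟨l, hl, rfl⟩
    rw [mem_ball_zero_iff] at hl
    exact ⟨sq_nonneg _, by nlinarith [norm_nonneg l]⟩
  · rintro ⟨hs0, hs1⟩
    refine ⟨(√s : ℂ), ?_, ?_⟩
    · rw [mem_ball_zero_iff, Complex.norm_real, Real.norm_of_nonneg (Real.sqrt_nonneg s)]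
      exact (Real.sqrt_lt' one_pos).mpr (by rwa [one_pow])
    · dsimp only
      rw [Complex.norm_real, Real.norm_of_nonneg (Real.sqrt_nonneg s), Real.sq_sqrt hs0]

lemma image_ball_eq_radialBerezin_image (ζ : ℂ) :
    (fun l : ℂ => (1 - (‖l‖ : ℂ) ^ 2) / (1 - ζ * (‖l‖ : ℂ) ^ 2)) '' Metric.ball 0 1 =
      radialBerezin ζ '' Ico 0 1 := by
  rw [← image_norm_sq_ball, image_image]
  simp only [radialBerezin, Complex.ofReal_pow]

lemma one_sub_mul_ne_zero_of_norm {ζ w : ℂ} (hζ : ‖ζ‖ ≤ 1) (hw : ‖w‖ < 1) : 1 - ζ * w ≠ 0 := by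
  refine sub_ne_zero.mpr fun h ↦ ?_
  have : ‖ζ * w‖ < 1 := by
    rw [norm_mul]
    exact (mul_le_of_le_one_left (norm_nonneg w) hζ).trans_lt hw
  rw [← h, norm_one] at this
  exact lt_irrefl _ this

lemma im_eq_zero_of_radialBerezin_eq_midpoint {ζ : ℂ} (hζ : ‖ζ‖ ≤ 1) {s : ℝ} (hs : s ∈ Ico 0 1)
    (h : radialBerezin ζ s = (1 / 2 : ℝ) • (1 : ℂ) + (1 / 2 : ℝ) • radialBerezin ζ (1 / 2)) :
    ζ.im = 0 := by
  have hs1 : 1 - ζ * s ≠ 0 :=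
    one_sub_mul_ne_zero_of_norm hζ (by rw [Complex.norm_real, Real.norm_of_nonneg hs.1]; exact hs.2)
  have h2 : 2 - ζ ≠ 0 := fun h2 ↦
    one_sub_mul_ne_zero_of_norm hζ (w := 1 / 2) (by norm_num) (by linear_combination h2 / 2)
  simp only [radialBerezin, Complex.real_smul] at h
  push_cast at h
  rw [div_eq_iff hs1] at h
  field_simp at h
  have key : (1 - ζ) * (ζ * s - (4 * s - 1)) = 0 := by
    linear_combination h
  rcases mul_eq_zero.mp key with hζ1 | hζs
  · rw [← sub_eq_zero.mp hζ1, Complex.one_im]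
  · have hs0 : s ≠ 0 := by
      rintro rfl
      norm_num at hζs
    simpa [hs0] using congrArg Complex.im hζs

lemma convex_radialBerezin_image {t : ℝ} (ht : t ≤ 1) : Convex ℝ (radialBerezin t '' Ico 0 1) := by
  have hcont : ContinuousOn (fun s : ℝ => (1 - s) / (1 - t * s)) (Ico 0 1) := by
    refine ContinuousOn.div (by fun_prop) (by fun_prop) fun s hs ↦ ?_
    nlinarith [hs.1, hs.2]
  have hreal : radialBerezin t '' Ico 0 1 =
      (Complex.ofRealCLM : ℝ →ₗ[ℝ] ℂ) '' ((fun s : ℝ => (1 - s) / (1 - t * s)) '' Ico 0 1) := by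
    rw [image_image]
    refine image_congr fun s _ ↦ ?_
    simp [radialBerezin]
  rw [hreal]
  exact (isPreconnected_Ico.image _ hcont).convex.linear_image _

/-- The Berezin transform of the composition operator `C_φ` with `φ(z) = ζ z` on the Hardy
space `H²(𝔻)` is `C̃_φ(λ) = (1 − |λ|²)/(1 − ζ|λ|²)`; its Berezin range
`{C̃_φ(λ) : λ ∈ 𝔻}` is convex if and only if `ζ ∈ [−1, 1]`. -/
theorem stmt_14 (ζ : ℂ) (hζ : ‖ζ‖ ≤ 1) :
    Convex ℝ ((fun l : ℂ => (1 - (‖l‖ : ℂ) ^ 2) / (1 - ζ * (‖l‖ : ℂ) ^ 2)) ''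
        Metric.ball (0 : ℂ) 1) ↔
      ∃ t : ℝ, -1 ≤ t ∧ t ≤ 1 ∧ ζ = (t : ℂ) := by
  rw [image_ball_eq_radialBerezin_image]
  constructor
  · intro hconv
    have hone : (1 : ℂ) ∈ radialBerezin ζ '' Ico 0 1 :=
      ⟨0, ⟨le_rfl, one_pos⟩, by simp [radialBerezin]⟩
    obtain ⟨s, hs, hmid⟩ := hconv hone ⟨1 / 2, by norm_num, rfl⟩ (by norm_num : (0 : ℝ) ≤ 1 / 2)
      (by norm_num : (0 : ℝ) ≤ 1 / 2) (by norm_num)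
    have him := im_eq_zero_of_radialBerezin_eq_midpoint hζ hs hmid
    have hre : |ζ.re| ≤ 1 := (Complex.abs_re_eq_norm.mpr him).trans_le hζ
    exact ⟨ζ.re, (abs_le.mp hre).1, (abs_le.mp hre).2, Complex.ext (by simp) (by simp [him])⟩
  · rintro ⟨t, -, ht, rfl⟩
    exact convex_radialBerezin_image ht
end
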